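/- arXiv:1704.00903 — 3 statements merged into one kernel-verified Lean document; each statement's English description precedes it below -/
import Mathlib

section
/- Let E be a standard Borel space, let κ be a Markov kernel from E to E, let x₀ ∈ E, and let ℙ denote the law on E^ℕ of the time-homogeneous Markov chain (X_n)_{n≥0} with X_0 = x₀ and one-step transition kernel κ (the Ionescu–Tulcea trajectory measure), where X_n is the n-th coordinate map. Let B, B₁ ⊆ E be measurable sets, let k ≥ 1 be a natural number and λ > 0 a real number. Assume that ℙ(X_n ∈ B for all n ∈ ℕ) = 1 and that the k-step kernel κ^k (the k-fold composition of κ) satisfies κ^k(x, B₁) ≥ λ for every x ∈ B. Then ℙ(∃ n₀ ∈ ℕ, X_{n₀} ∈ B₁) = 1. -/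
open MeasureTheory ProbabilityTheory Set

/-- The `k`-step kernel: the `k`-fold composition of `κ` with itself. -/
noncomputable def kernelPow {E : Type*} [MeasurableSpace E] (κ : Kernel E E) :
    ℕ → Kernel E E
  | 0 => Kernel.id
  | n + 1 => κ ∘ₖ kernelPow κ n

/-- The σ-algebra on trajectories generated by the coordinates `0, …, n`. -/
def trajFiltration (E : Type*) [MeasurableSpace E] (n : ℕ) : MeasurableSpace (ℕ → E) :=
  MeasurableSpace.comap (fun ω (i : Fin (n + 1)) => ω i) inferInstance

/-!
Sample the chain every `k` steps and let `Sₘ` be the event that the first `m + 1` samples all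
lie in `C = B \ B₁`. From any point of `C` the chain is outside `C` after `k` steps with
probability at least `λ`, so the Markov property gives `ℙ(Sₘ₊₁) ≤ (1 - λ) ℙ(Sₘ)`. Hence
`ℙ(Sₘ) → 0`, and a trajectory that stays in `B` forever but never visits `B₁` lies in every `Sₘ`.
-/

open scoped ENNReal

lemma measure_sdiff_le_one_sub_mul {α : Type*} [MeasurableSpace α] {μ : Measure α}
    {S T : Set α} (hT : NullMeasurableSet T μ) (hS : μ S ≠ ∞) {c : ℝ≥0∞}
    (h : c * μ S ≤ μ (S ∩ T)) : μ (S \ T) ≤ (1 - c) * μ S := by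
  have hST : μ (S \ T) = μ S - μ (S ∩ T) :=
    ENNReal.eq_sub_of_add_eq (measure_ne_top_of_subset inter_subset_left hS)
      (by rw [add_comm, measure_inter_add_sdiff₀ S hT])
  rw [hST, ENNReal.sub_mul fun _ _ => hS, one_mul]
  exact tsub_le_tsub_left h _

namespace ProbabilityTheory

variable {E : Type*} [MeasurableSpace E]

lemma trajFiltration_mono {n m : ℕ} (h : n ≤ m) :
    trajFiltration E n ≤ trajFiltration E m := by
  rintro S ⟨T, hT, rfl⟩
  exact ⟨(fun v (i : Fin (n + 1)) => v (Fin.castLE (by omega) i)) ⁻¹' T,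
    (measurable_pi_lambda _ fun i => measurable_pi_apply _) hT, rfl⟩

lemma measurableSet_trajFiltration_coord {i n : ℕ} (h : i ≤ n) {A : Set E}
    (hA : MeasurableSet A) :
    MeasurableSet[trajFiltration E n] {ω : ℕ → E | ω i ∈ A} :=
  ⟨(fun v : Fin (n + 1) → E => v ⟨i, by omega⟩) ⁻¹' A, (measurable_pi_apply _) hA, rfl⟩

def HasMarkovProperty (κ : Kernel E E) (P : Measure (ℕ → E)) : Prop :=
  ∀ (n : ℕ) (S : Set (ℕ → E)), MeasurableSet[trajFiltration E n] S →
    ∀ (A : Set E), MeasurableSet A →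
      P (S ∩ {ω | ω (n + 1) ∈ A}) = ∫⁻ ω in S, κ (ω n) A ∂P

namespace HasMarkovProperty

variable {κ : Kernel E E} {P : Measure (ℕ → E)}

lemma map_restrict_succ (hP : HasMarkovProperty κ P) {n : ℕ} {S : Set (ℕ → E)}
    (hS : MeasurableSet[trajFiltration E n] S) :
    (P.restrict S).map (fun ω => ω (n + 1)) = κ ∘ₘ (P.restrict S).map (fun ω => ω n) := by
  ext A hA
  rw [Measure.map_apply (measurable_pi_apply _) hA,
    Measure.restrict_apply (measurable_pi_apply _ hA), Measure.bind_apply hA κ.aemeasurable,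
    lintegral_map (κ.measurable_coe hA) (measurable_pi_apply n), inter_comm]
  exact hP n S hS A hA

lemma map_restrict_add (hP : HasMarkovProperty κ P) (k : ℕ) {n : ℕ} {S : Set (ℕ → E)}
    (hS : MeasurableSet[trajFiltration E n] S) :
    (P.restrict S).map (fun ω => ω (n + k)) =
      kernelPow κ k ∘ₘ (P.restrict S).map (fun ω => ω n) := by
  induction k with
  | zero => exact Measure.id_comp.symm
  | succ k ih =>
    rw [← add_assoc, hP.map_restrict_succ (trajFiltration_mono (Nat.le_add_right n k) S hS), ih,
      Measure.comp_assoc]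
    rfl

lemma measure_inter_coord_add (hP : HasMarkovProperty κ P) (k : ℕ) {n : ℕ} {S : Set (ℕ → E)}
    (hS : MeasurableSet[trajFiltration E n] S) {A : Set E} (hA : MeasurableSet A) :
    P (S ∩ {ω | ω (n + k) ∈ A}) = ∫⁻ ω in S, kernelPow κ k (ω n) A ∂P := by
  have h := congrArg (· A) (hP.map_restrict_add k hS)
  rwa [Measure.map_apply (measurable_pi_apply _) hA,
    Measure.restrict_apply (measurable_pi_apply _ hA), Measure.bind_apply hA
      (kernelPow κ k).aemeasurable,
    lintegral_map ((kernelPow κ k).measurable_coe hA) (measurable_pi_apply n), inter_comm] at h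

lemma measure_sdiff_coord_add_le [IsFiniteMeasure P] (hP : HasMarkovProperty κ P) (k : ℕ)
    {n : ℕ} {S : Set (ℕ → E)} (hS : MeasurableSet[trajFiltration E n] S) {A : Set E}
    (hA : MeasurableSet A) {c : ℝ≥0∞} (hc : ∀ ω ∈ S, c ≤ kernelPow κ k (ω n) A) :
    P (S \ {ω | ω (n + k) ∈ A}) ≤ (1 - c) * P S := by
  have hT : MeasurableSet {ω : ℕ → E | ω (n + k) ∈ A} := measurable_pi_apply (n + k) hA
  refine measure_sdiff_le_one_sub_mul hT.nullMeasurableSet (measure_ne_top P S) ?_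
  rw [hP.measure_inter_coord_add k hS hA, ← setLIntegral_const]
  exact setLIntegral_mono ((kernelPow κ k).measurable_coe hA |>.comp (measurable_pi_apply n)) hc

theorem measure_forall_coord_mul_mem_eq_zero [IsFiniteMeasure P] (hP : HasMarkovProperty κ P)
    {C : Set E} (hC : MeasurableSet C) {c : ℝ≥0∞} (hc : 0 < c) (k : ℕ)
    (hexit : ∀ x ∈ C, c ≤ kernelPow κ k x Cᶜ) :
    P {ω | ∀ j, ω (j * k) ∈ C} = 0 := by
  set S : ℕ → Set (ℕ → E) := fun m => {ω | ∀ j ≤ m, ω (j * k) ∈ C}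
  have hS : ∀ m, MeasurableSet[trajFiltration E (m * k)] (S m) := fun m => by
    simp only [S, ofPred_forall]
    exact .iInter fun j => .iInter fun hj =>
      measurableSet_trajFiltration_coord (Nat.mul_le_mul_right k hj) hC
  have hdecay : ∀ m, P (S (m + 1)) ≤ (1 - c) * P (S m) := fun m => calc
    P (S (m + 1)) ≤ P (S m \ {ω | ω (m * k + k) ∈ Cᶜ}) :=
      measure_mono fun ω hω => ⟨fun j hj => hω j (hj.trans m.le_succ),
        by simpa [add_mul] using hω (m + 1) le_rfl⟩
    _ ≤ (1 - c) * P (S m) :=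
      hP.measure_sdiff_coord_add_le k (hS m) hC.compl fun ω hω => hexit _ (hω m le_rfl)
  have hpow : ∀ m, P (S m) ≤ (1 - c) ^ m * P univ := by
    intro m
    induction m with
    | zero => simpa using measure_mono (subset_univ _)
    | succ m ih => calc
      P (S (m + 1)) ≤ (1 - c) * ((1 - c) ^ m * P univ) := (hdecay m).trans (by gcongr)
      _ = (1 - c) ^ (m + 1) * P univ := by ring
  have hlim : Filter.Tendsto (fun m => (1 - c) ^ m * P univ) Filter.atTop (nhds 0) := by
    simpa using ENNReal.Tendsto.mul_const (ENNReal.tendsto_pow_atTop_nhds_zero_of_lt_one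
      (ENNReal.sub_lt_self ENNReal.one_ne_top one_ne_zero hc.ne')) (.inr (measure_ne_top P _))
  refine nonpos_iff_eq_zero.1 (ge_of_tendsto' hlim fun m => ?_)
  have htrap : {ω : ℕ → E | ∀ j, ω (j * k) ∈ C} ⊆ S m := fun ω hω j _ => hω j
  exact (measure_mono htrap).trans (hpow m)

end HasMarkovProperty

end ProbabilityTheory

theorem stmt0_general
    {E : Type*} [MeasurableSpace E]
    (κ : Kernel E E)
    (P : Measure (ℕ → E)) [IsProbabilityMeasure P]
    -- … and satisfies the Markov property with transition kernel `κ`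
    (hMarkov : ∀ (n : ℕ) (S : Set (ℕ → E)), MeasurableSet[trajFiltration E n] S →
      ∀ (A : Set E), MeasurableSet A →
        P (S ∩ {ω | ω (n + 1) ∈ A}) = ∫⁻ ω in S, κ (ω n) A ∂P)
    (B B₁ : Set E) (hB : MeasurableSet B) (hB₁ : MeasurableSet B₁)
    (k : ℕ) (lam : ℝ) (hlam : 0 < lam)
    -- the chain stays in `B` at all times, almost surely
    (hstay : P {ω | ∀ n : ℕ, ω n ∈ B} = 1)
    -- the `k`-step kernel satisfies `κ^k(x, B₁) ≥ λ` for every `x ∈ B`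
    (hstep : ∀ x ∈ B, ENNReal.ofReal lam ≤ kernelPow κ k x B₁) :
    P {ω | ∃ n₀ : ℕ, ω n₀ ∈ B₁} = 1 := by
  have hexit : ∀ x ∈ B \ B₁, ENNReal.ofReal lam ≤ kernelPow κ k x (B \ B₁)ᶜ :=
    fun x hx => (hstep x hx.1).trans (measure_mono fun y hy hy' => hy'.2 hy)
  have htrapped : P {ω | ∀ j, ω (j * k) ∈ B \ B₁} = 0 :=
    HasMarkovProperty.measure_forall_coord_mul_mem_eq_zero hMarkov (hB.diff hB₁)
      (ENNReal.ofReal_pos.2 hlam) k hexit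
  have hstay_ae : ∀ᵐ ω ∂P, ∀ n, ω n ∈ B := by
    rw [ae_iff_measure_eq (by measurability), hstay, measure_univ]
  rw [← measure_univ (μ := P), ← ae_iff_measure_eq (by measurability)]
  filter_upwards [hstay_ae, measure_eq_zero_iff_ae_notMem.1 htrapped] with ω hωB hω
  obtain ⟨j, hj⟩ := not_forall.1 hω
  exact ⟨j * k, not_not.1 fun h => hj ⟨hωB _, h⟩⟩

theorem stmt0
    {E : Type*} [MeasurableSpace E] [StandardBorelSpace E]
    (κ : Kernel E E) [IsMarkovKernel κ]
    (x₀ : E)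
    (P : Measure (ℕ → E)) [IsProbabilityMeasure P]
    -- `P` is the trajectory law of the chain started at `x₀` with one-step kernel `κ`:
    -- the chain starts at `x₀` …
    (hinit : P {ω | ω 0 = x₀} = 1)
    -- … and satisfies the Markov property with transition kernel `κ`
    (hMarkov : ∀ (n : ℕ) (S : Set (ℕ → E)), MeasurableSet[trajFiltration E n] S →
      ∀ (A : Set E), MeasurableSet A →
        P (S ∩ {ω | ω (n + 1) ∈ A}) = ∫⁻ ω in S, κ (ω n) A ∂P)
    (B B₁ : Set E) (hB : MeasurableSet B) (hB₁ : MeasurableSet B₁)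
    (k : ℕ) (hk : 1 ≤ k) (lam : ℝ) (hlam : 0 < lam)
    -- the chain stays in `B` at all times, almost surely
    (hstay : P {ω | ∀ n : ℕ, ω n ∈ B} = 1)
    -- the `k`-step kernel satisfies `κ^k(x, B₁) ≥ λ` for every `x ∈ B`
    (hstep : ∀ x ∈ B, ENNReal.ofReal lam ≤ kernelPow κ k x B₁) :
    P {ω | ∃ n₀ : ℕ, ω n₀ ∈ B₁} = 1 :=
  stmt0_general κ P hMarkov B B₁ hB hB₁ k lam hlam hstay hstep
end

section
/- Let b > 0, let f and g be continuous strictly increasing maps of [0,b] into [0,b], and let I₁ ⊆ I₂ ⊆ [0,b] be compact intervals such that f(I₁) ⊆ I₁, g(I₁) ⊆ I₁, f(I₂) ⊆ I₂, g(I₂) ⊆ I₂, and for every x ∈ I₂ there exists m ∈ ℕ with f^[m](x) ∈ I₁ or g^[m](x) ∈ I₁ (where f^[m] denotes the m-th iterate). Then for every x₀ ∈ I₂, μ({ω : ∃ n₀ ∈ ℕ, ∀ n ≥ n₀, X n ω ∈ I₁}) = 1. -/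
open MeasureTheory ProbabilityTheory Filter Set

/-- The random orbit driven by a sequence of coin flips: apply `f` when the coin shows
`true` and `g` when it shows `false`. -/
def randOrbit (f g : ℝ → ℝ) (x₀ : ℝ) : ℕ → (ℕ → Bool) → ℝ
  | 0, _ => x₀
  | n + 1, ω => if ω n then f (randOrbit f g x₀ n ω) else g (randOrbit f g x₀ n ω)

/-! The orbit never leaves `I₂`, and once in `I₁` it stays there. Since `f` and `g` are
increasing, the orbit map along a fixed word is monotone on `I₂`, so a word taking the right
endpoint of `I₂` into `I₁` followed by a word taking the left endpoint into `I₁` sends all of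
`I₂` into `I₁`. The disjoint blocks `[j k, j k + k)` of coin flips spell out this word of length
`k` independently, each with the same positive probability, so by the second Borel–Cantelli
lemma the word almost surely occurs, after which the orbit is trapped in `I₁`. -/

open Function
open scoped ENNReal

section randOrbit

variable {f g : ℝ → ℝ}

theorem randOrbit_succ (x : ℝ) (n : ℕ) (ω : ℕ → Bool) :
    randOrbit f g x (n + 1) ω =
      if ω n then f (randOrbit f g x n ω) else g (randOrbit f g x n ω) := rfl

theorem randOrbit_add (x : ℝ) (t m : ℕ) (ω : ℕ → Bool) :
    randOrbit f g x (t + m) ω = randOrbit f g (randOrbit f g x t ω) m (fun i => ω (t + i)) := by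
  induction m with
  | zero => rfl
  | succ m ih => rw [← Nat.add_assoc, randOrbit_succ, randOrbit_succ, ih]

theorem randOrbit_congr {x : ℝ} {n : ℕ} {ω ω' : ℕ → Bool} (h : ∀ i < n, ω i = ω' i) :
    randOrbit f g x n ω = randOrbit f g x n ω' := by
  induction n with
  | zero => rfl
  | succ n ih =>
    simp only [randOrbit_succ, h n n.lt_succ_self, ih fun i hi => h i (Nat.lt_succ_of_lt hi)]

theorem randOrbit_const (x : ℝ) (m : ℕ) (c : Bool) :
    randOrbit f g x m (fun _ => c) = (bif c then f else g)^[m] x := by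
  induction m with
  | zero => rfl
  | succ m ih => cases c <;> simp [randOrbit_succ, ih, iterate_succ_apply']

theorem randOrbit_mem {s : Set ℝ} (hf : MapsTo f s s) (hg : MapsTo g s s) {x : ℝ} (hx : x ∈ s)
    (n : ℕ) (ω : ℕ → Bool) : randOrbit f g x n ω ∈ s := by
  induction n with
  | zero => exact hx
  | succ n ih => by_cases h : ω n <;> simp [randOrbit_succ, h, hf ih, hg ih]

theorem monotoneOn_randOrbit {s : Set ℝ} (hf : MonotoneOn f s) (hg : MonotoneOn g s)
    (hfs : MapsTo f s s) (hgs : MapsTo g s s) (n : ℕ) (ω : ℕ → Bool) :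
    MonotoneOn (fun x => randOrbit f g x n ω) s := by
  induction n with
  | zero => exact monotoneOn_id
  | succ n ih =>
    intro x hx y hy hxy
    have hn := ih hx hy hxy
    have hxs := randOrbit_mem hfs hgs hx n ω
    have hys := randOrbit_mem hfs hgs hy n ω
    by_cases h : ω n <;> simp only [randOrbit_succ, h] <;> simp [hf hxs hys hn, hg hxs hys hn]

theorem randOrbit_mem_of_mapsTo_word {s₁ s₂ : Set ℝ} (hf₁ : MapsTo f s₁ s₁) (hg₁ : MapsTo g s₁ s₁)
    (hf₂ : MapsTo f s₂ s₂) (hg₂ : MapsTo g s₂ s₂) {k : ℕ} {w : ℕ → Bool}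
    (hw : MapsTo (fun y => randOrbit f g y k w) s₂ s₁) {x : ℝ} (hx : x ∈ s₂) {ω : ℕ → Bool}
    {t : ℕ} (ht : ∀ i < k, ω (t + i) = w i) {n : ℕ} (hn : t + k ≤ n) :
    randOrbit f g x n ω ∈ s₁ := by
  obtain ⟨d, rfl⟩ := Nat.exists_eq_add_of_le hn
  rw [randOrbit_add, randOrbit_add, randOrbit_congr ht]
  exact randOrbit_mem hf₁ hg₁ (hw (randOrbit_mem hf₂ hg₂ hx t ω)) d _

theorem exists_mapsTo_randOrbit_Icc {a₁ c₁ a₂ c₂ : ℝ} (hf : MonotoneOn f (Icc a₂ c₂))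
    (hg : MonotoneOn g (Icc a₂ c₂)) (hfI₁ : MapsTo f (Icc a₁ c₁) (Icc a₁ c₁))
    (hgI₁ : MapsTo g (Icc a₁ c₁) (Icc a₁ c₁)) (hfI₂ : MapsTo f (Icc a₂ c₂) (Icc a₂ c₂))
    (hgI₂ : MapsTo g (Icc a₂ c₂) (Icc a₂ c₂)) (ha₁c₁ : a₁ ≤ c₁) (ha₂c₂ : a₂ ≤ c₂)
    (hI₁I₂ : Icc a₁ c₁ ⊆ Icc a₂ c₂)
    (hreach : ∀ x ∈ Icc a₂ c₂, ∃ m ω, randOrbit f g x m ω ∈ Icc a₁ c₁) :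
    ∃ k w, MapsTo (fun y => randOrbit f g y k w) (Icc a₂ c₂) (Icc a₁ c₁) := by
  obtain ⟨m, u, hu⟩ := hreach c₂ ⟨ha₂c₂, le_rfl⟩
  obtain ⟨n, v, hv⟩ := hreach a₂ ⟨le_rfl, ha₂c₂⟩
  refine ⟨m + n, fun i => if i < m then u i else v (i - m), fun y hy => ?_⟩
  have hmono := monotoneOn_randOrbit hf hg hfI₂ hgI₂
  have hc₁ : c₁ ∈ Icc a₁ c₁ := ⟨ha₁c₁, le_rfl⟩
  set z := randOrbit f g y m u
  have hz : z ∈ Icc a₂ c₂ := randOrbit_mem hfI₂ hgI₂ hy m u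
  -- `u` pushes `I₂` below `c₁`; then `v` squeezes `[a₂, c₁]` between the images of `a₂` and `c₁`
  have hzc₁ : z ≤ c₁ := (hmono m u hy ⟨ha₂c₂, le_rfl⟩ hy.2).trans hu.2
  have hsplit : randOrbit f g y (m + n) (fun i => if i < m then u i else v (i - m)) =
      randOrbit f g z n v := by
    rw [randOrbit_add, randOrbit_congr fun i (hi : i < m) => if_pos hi]
    simp [z]
  beta_reduce
  rw [hsplit]
  exact ⟨hv.1.trans (hmono n v ⟨le_rfl, ha₂c₂⟩ hz hz.1),
    (hmono n v hz (hI₁I₂ hc₁) hzc₁).trans (randOrbit_mem hfI₁ hgI₁ hc₁ n v).2⟩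

end randOrbit

section Independence

variable {Ω β ι : Type*} [MeasurableSpace Ω] [MeasurableSpace β] [MeasurableSingletonClass β]
  {μ : Measure Ω} {X : ι → Ω → β}

theorem iIndepSet_biInter_preimage_singleton {κ : Type*} (hXm : ∀ n, Measurable (X n))
    (hX : iIndepFun X μ) {S : κ → Finset ι} (hS : Pairwise (Disjoint on S)) (v : ι → β) :
    iIndepSet (fun j => ⋂ n ∈ S j, X n ⁻¹' {v n}) μ := by
  classical
  have hprod (T : Finset ι) : μ (⋂ n ∈ T, X n ⁻¹' {v n}) = ∏ n ∈ T, μ (X n ⁻¹' {v n}) :=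
    hX.measure_inter_preimage_eq_mul T fun _ _ => measurableSet_singleton _
  rw [iIndepSet_iff_meas_biInter fun j =>
    Finset.measurableSet_biInter _ fun n _ => hXm n (measurableSet_singleton _)]
  intro J
  rw [← Finset.set_biInter_biUnion, hprod, Finset.prod_biUnion (hS.set_pairwise _)]
  exact Finset.prod_congr rfl fun j _ => (hprod (S j)).symm

theorem measure_exists_forall_lt_eq_one {X : ℕ → Ω → β} (hXm : ∀ n, Measurable (X n))
    (hX : iIndepFun X μ) {δ : ℝ≥0∞} (hδ : δ ≠ 0) (hδX : ∀ n c, δ ≤ μ (X n ⁻¹' {c}))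
    (k : ℕ) (w : ℕ → β) :
    μ {ω | ∃ t, ∀ i < k, X (t + i) ω = w i} = 1 := by
  have := hX.isProbabilityMeasure
  set block : ℕ → Finset ℕ := fun j => Finset.Ico (j * k) (j * k + k)
  set E : ℕ → Set Ω := fun j => ⋂ n ∈ block j, X n ⁻¹' {w (n % k)}
  have hblock : Pairwise (Disjoint on block) := by
    intro j j' hne
    refine Finset.disjoint_left.2 fun n hn hn' => hne ?_
    rw [Finset.mem_Ico] at hn hn'
    rw [← Nat.div_eq_of_lt_le hn.1 (by linarith [hn.2]),
      ← Nat.div_eq_of_lt_le hn'.1 (by linarith [hn'.2])]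
  have hE (j : ℕ) : δ ^ k ≤ μ (E j) :=
    calc δ ^ k = ∏ _ ∈ block j, δ := by simp [block]
      _ ≤ ∏ n ∈ block j, μ (X n ⁻¹' {w (n % k)}) := Finset.prod_le_prod' fun n _ => hδX n _
      _ = μ (E j) := (hX.measure_inter_preimage_eq_mul _ fun _ _ => measurableSet_singleton _).symm
  have hsum : ∑' j, μ (E j) = ∞ := top_unique <|
    (ENNReal.tsum_const_eq_top_of_ne_zero (pow_ne_zero k hδ)).symm.le.trans
      (ENNReal.tsum_le_tsum hE)
  have hlimsup := measure_limsup_eq_one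
    (fun j => Finset.measurableSet_biInter _ fun n _ => hXm n (measurableSet_singleton _))
    (iIndepSet_biInter_preimage_singleton hXm hX hblock _) hsum
  refine le_antisymm prob_le_one (hlimsup ▸ measure_mono fun ω hω => ?_)
  obtain ⟨j, hj⟩ := (mem_limsup_iff_frequently_mem.mp hω).exists
  refine ⟨j * k, fun i hi => ?_⟩
  simpa [Nat.mul_add_mod_of_lt hi] using
    mem_iInter₂.mp hj (j * k + i) (Finset.mem_Ico.2 ⟨by omega, by omega⟩)

end Independence

theorem measure_coord_eq_ofReal {μ : Measure (ℕ → Bool)} [IsProbabilityMeasure μ] {p : ℝ}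
    (hp : 0 ≤ p) (hcoin : ∀ n, μ {ω | ω n = true} = ENNReal.ofReal p) (n : ℕ) (c : Bool) :
    μ ((fun ω => ω n) ⁻¹' {c}) = ENNReal.ofReal (bif c then p else 1 - p) := by
  cases c
  · have hfalse : (fun ω : ℕ → Bool => ω n) ⁻¹' {false} = {ω | ω n = true}ᶜ := by ext; simp
    rw [hfalse,
      prob_compl_eq_one_sub (measurableSet_eq_fun (measurable_pi_apply n) measurable_const), hcoin, cond_false, ENNReal.ofReal_sub _ hp, ENNReal.ofReal_one]
  · exact hcoin n

theorem stmt1_general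
    (b : ℝ)
    (f g : ℝ → ℝ)
    (hfm : StrictMonoOn f (Icc 0 b)) (hgm : StrictMonoOn g (Icc 0 b))
    -- the compact intervals `I₁ = [a₁, c₁] ⊆ I₂ = [a₂, c₂] ⊆ [0, b]`
    (a₁ c₁ a₂ c₂ : ℝ) (ha₁c₁ : a₁ ≤ c₁) (ha₂c₂ : a₂ ≤ c₂)
    (hI₁I₂ : Icc a₁ c₁ ⊆ Icc a₂ c₂) (hI₂b : Icc a₂ c₂ ⊆ Icc 0 b)
    -- invariance of the intervals
    (hfI₁ : MapsTo f (Icc a₁ c₁) (Icc a₁ c₁)) (hgI₁ : MapsTo g (Icc a₁ c₁) (Icc a₁ c₁))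
    (hfI₂ : MapsTo f (Icc a₂ c₂) (Icc a₂ c₂)) (hgI₂ : MapsTo g (Icc a₂ c₂) (Icc a₂ c₂))
    -- every point of `I₂` is sent into `I₁` by some iterate of `f` or of `g`
    (habs : ∀ x ∈ Icc a₂ c₂, ∃ m : ℕ, f^[m] x ∈ Icc a₁ c₁ ∨ g^[m] x ∈ Icc a₁ c₁)
    -- the i.i.d. coin-flip measure
    (p : ℝ) (hp : p ∈ Ioo (0 : ℝ) 1)
    (μ : Measure (ℕ → Bool)) [IsProbabilityMeasure μ]
    (hindep : iIndepFun (fun n ω => ω n) μ)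
    (hcoin : ∀ n, μ {ω | ω n = true} = ENNReal.ofReal p) :
    ∀ x₀ ∈ Icc a₂ c₂,
      μ {ω | ∃ n₀ : ℕ, ∀ n ≥ n₀, randOrbit f g x₀ n ω ∈ Icc a₁ c₁} = 1 := by
  intro x₀ hx₀
  have hreach (x : ℝ) (hx : x ∈ Icc a₂ c₂) : ∃ m ω, randOrbit f g x m ω ∈ Icc a₁ c₁ := by
    obtain ⟨m, h | h⟩ := habs x hx
    exacts [⟨m, fun _ => true, by simpa [randOrbit_const]⟩,
      ⟨m, fun _ => false, by simpa [randOrbit_const]⟩]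
  obtain ⟨k, w, hw⟩ := exists_mapsTo_randOrbit_Icc (hfm.monotoneOn.mono hI₂b)
    (hgm.monotoneOn.mono hI₂b) hfI₁ hgI₁ hfI₂ hgI₂ ha₁c₁ ha₂c₂ hI₁I₂ hreach
  have hδ : ENNReal.ofReal (min p (1 - p)) ≠ 0 :=
    (ENNReal.ofReal_pos.2 (lt_min hp.1 (sub_pos.2 hp.2))).ne'
  have hδX (n : ℕ) (c : Bool) : ENNReal.ofReal (min p (1 - p)) ≤ μ ((fun ω => ω n) ⁻¹' {c}) := by
    rw [measure_coord_eq_ofReal hp.1.le hcoin]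
    exact ENNReal.ofReal_le_ofReal (by cases c <;> simp)
  have hword := measure_exists_forall_lt_eq_one measurable_pi_apply hindep hδ hδX k w
  refine le_antisymm prob_le_one (hword ▸ measure_mono fun ω ⟨t, ht⟩ => ⟨t + k, fun n hn => ?_⟩)
  exact randOrbit_mem_of_mapsTo_word hfI₁ hgI₁ hfI₂ hgI₂ hw hx₀ ht hn

theorem stmt1
    (b : ℝ) (hb : 0 < b)
    (f g : ℝ → ℝ)
    (hfmaps : MapsTo f (Icc 0 b) (Icc 0 b)) (hgmaps : MapsTo g (Icc 0 b) (Icc 0 b))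
    (hfc : ContinuousOn f (Icc 0 b)) (hgc : ContinuousOn g (Icc 0 b))
    (hfm : StrictMonoOn f (Icc 0 b)) (hgm : StrictMonoOn g (Icc 0 b))
    -- the compact intervals `I₁ = [a₁, c₁] ⊆ I₂ = [a₂, c₂] ⊆ [0, b]`
    (a₁ c₁ a₂ c₂ : ℝ) (ha₁c₁ : a₁ ≤ c₁) (ha₂c₂ : a₂ ≤ c₂)
    (hI₁I₂ : Icc a₁ c₁ ⊆ Icc a₂ c₂) (hI₂b : Icc a₂ c₂ ⊆ Icc 0 b)
    -- invariance of the intervals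
    (hfI₁ : MapsTo f (Icc a₁ c₁) (Icc a₁ c₁)) (hgI₁ : MapsTo g (Icc a₁ c₁) (Icc a₁ c₁))
    (hfI₂ : MapsTo f (Icc a₂ c₂) (Icc a₂ c₂)) (hgI₂ : MapsTo g (Icc a₂ c₂) (Icc a₂ c₂))
    -- every point of `I₂` is sent into `I₁` by some iterate of `f` or of `g`
    (habs : ∀ x ∈ Icc a₂ c₂, ∃ m : ℕ, f^[m] x ∈ Icc a₁ c₁ ∨ g^[m] x ∈ Icc a₁ c₁)
    -- the i.i.d. coin-flip measure
    (p : ℝ) (hp : p ∈ Ioo (0 : ℝ) 1)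
    (μ : Measure (ℕ → Bool)) [IsProbabilityMeasure μ]
    (hindep : iIndepFun (fun n ω => ω n) μ)
    (hcoin : ∀ n, μ {ω | ω n = true} = ENNReal.ofReal p) :
    ∀ x₀ ∈ Icc a₂ c₂,
      μ {ω | ∃ n₀ : ℕ, ∀ n ≥ n₀, randOrbit f g x₀ n ω ∈ Icc a₁ c₁} = 1 :=
  stmt1_general b f g hfm hgm a₁ c₁ a₂ c₂ ha₁c₁ ha₂c₂ hI₁I₂ hI₂b hfI₁ hgI₁ hfI₂ hgI₂ habs p hp μ
    hindep hcoin
end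

section
/- Let f be a strictly increasing Allee map on [0,b] with threshold A_f and carrying capacity K_f, and let g be a strictly increasing Allee map on [0,b] with threshold A_g and carrying capacity K_g, where A_f < A_g < K_f < K_g. Let δ > 0 be such that the sets U₁ = {x ∈ (0,A_f) : min(x−f(x), x−g(x)) ≥ δ}, U₂ = {x ∈ (A_g,K_f) : min(f(x)−x, g(x)−x) ≥ δ}, U₃ = {x ∈ (K_g,b) : min(x−f(x), x−g(x)) ≥ δ} are nonempty, and assume that for every x ∈ [0,b] there exists x* ∈ [x,b] with min(x*−f(x*), x*−g(x*)) ≥ δ. Set w₁ = inf U₁ and z₁ = sup U₁. If y₀ ∈ [0, z₁], then μ({ω : ∃ n₀ ∈ ℕ, ∀ n ≥ n₀, Y n ω ∈ [0, w₁)}) = 1. -/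
/-!
Because every point of `U₁` is a level at which both `f` and `g` drop by at least `δ`, and the
perturbations are smaller than `δ`, the orbit can never cross `z₁ = sup U₁` or `w₁ = inf U₁`
upwards (both levels inherit the `δ`-gap by continuity). Below `A_f < A_g` both maps lie strictly
under the diagonal, so the unperturbed iterates of `max f g` started at `z₁` tend to `0` and fall
below `w₁` after some `N` steps; by monotonicity, `N` consecutive negative perturbations push the
orbit under these iterates. Runs of `N` negative perturbations occur infinitely often with
probability `0` or `1` (Kolmogorov), and at least `ν (-δ, 0) ^ N > 0`, hence almost surely.
-/

open MeasureTheory ProbabilityTheory Filter Set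

/-- `f` is a strictly increasing Allee map on `[0, b]` with threshold `A` and
carrying capacity `K`. -/
def IsIncAlleeMap (b A K : ℝ) (f : ℝ → ℝ) : Prop :=
  0 < A ∧ A < K ∧ K < b ∧
  MapsTo f (Icc 0 b) (Icc 0 b) ∧
  ContinuousOn f (Icc 0 b) ∧
  StrictMonoOn f (Icc 0 b) ∧
  f 0 = 0 ∧ f A = A ∧ f K = K ∧
  (∀ x ∈ Ioo 0 A ∪ Ioc K b, f x < x) ∧
  (∀ x ∈ Ioo A K, x < f x)

/-- Truncation of the real line to the interval `[0, b]`. -/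
noncomputable def chi (b x : ℝ) : ℝ := if x < 0 then 0 else if x ≤ b then x else b

/-- The randomly perturbed orbit: at each step apply `f` (on `true`) or `g` (on `false`),
add the noise, and truncate to `[0, b]`. -/
noncomputable def pertOrbit (b : ℝ) (f g : ℝ → ℝ) (y₀ : ℝ) :
    ℕ → (ℕ → Bool × ℝ) → ℝ
  | 0, _ => y₀
  | n + 1, ω =>
      if (ω n).1 then chi b (f (pertOrbit b f g y₀ n ω) + (ω n).2)
      else chi b (g (pertOrbit b f g y₀ n ω) + (ω n).2)

open scoped Topology ENNReal

lemma chi_mem_Icc {b : ℝ} (hb : 0 ≤ b) (x : ℝ) : chi b x ∈ Icc 0 b := by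
  unfold chi; split_ifs <;> constructor <;> linarith

lemma chi_le {b x c : ℝ} (hx : x ≤ c) (hc : 0 ≤ c) (hcb : c ≤ b) : chi b x ≤ c := by
  unfold chi; split_ifs <;> linarith

lemma chi_lt {b x c : ℝ} (hx : x < c) (hc : 0 < c) (hcb : c ≤ b) : chi b x < c := by
  unfold chi; split_ifs <;> linarith

section Step

variable {b : ℝ} {φ : ℝ → ℝ} {y e : ℝ}

lemma chi_add_lt_of_le (hφ : MonotoneOn φ (Icc 0 b)) (hy : y ∈ Icc 0 b) {c δ : ℝ}
    (hc : c ∈ Ioc 0 b) (hyc : y ≤ c) (hgap : δ ≤ c - φ c) (he : e < δ) :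
    chi b (φ y + e) < c :=
  chi_lt (by linarith [hφ hy (Ioc_subset_Icc_self hc) hyc]) hc.1 hc.2

lemma chi_add_le_of_le (hφ : MonotoneOn φ (Icc 0 b)) (hy : y ∈ Icc 0 b) {a t : ℝ}
    (ha : a ∈ Icc 0 b) (hya : y ≤ a) (he : e ≤ 0) (ht : φ a ≤ t) (ht' : t ∈ Icc 0 b) :
    chi b (φ y + e) ≤ t :=
  chi_le (by linarith [hφ hy ha hya]) ht'.1 ht'.2

end Step

section Orbit

variable {b : ℝ} {f g : ℝ → ℝ} {y₀ : ℝ} {ω : ℕ → Bool × ℝ}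

lemma pertOrbit_mem_Icc (hy₀ : y₀ ∈ Icc 0 b) : ∀ n, pertOrbit b f g y₀ n ω ∈ Icc 0 b
  | 0 => hy₀
  | n + 1 => by
    simp only [pertOrbit]
    split_ifs <;> exact chi_mem_Icc (hy₀.1.trans hy₀.2) _

lemma pertOrbit_succ_lt (hf : MonotoneOn f (Icc 0 b)) (hg : MonotoneOn g (Icc 0 b))
    (hy₀ : y₀ ∈ Icc 0 b) {c δ : ℝ} (hc : c ∈ Ioc 0 b) (hfc : δ ≤ c - f c) (hgc : δ ≤ c - g c)
    {n : ℕ} (hn : pertOrbit b f g y₀ n ω ≤ c) (he : (ω n).2 < δ) :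
    pertOrbit b f g y₀ (n + 1) ω < c := by
  have hY := pertOrbit_mem_Icc (f := f) (g := g) (ω := ω) hy₀ n
  simp only [pertOrbit]
  split_ifs
  · exact chi_add_lt_of_le hf hY hc hn hfc he
  · exact chi_add_lt_of_le hg hY hc hn hgc he

lemma pertOrbit_lt_of_le (hf : MonotoneOn f (Icc 0 b)) (hg : MonotoneOn g (Icc 0 b))
    (hy₀ : y₀ ∈ Icc 0 b) {c δ : ℝ} (hc : c ∈ Ioc 0 b) (hfc : δ ≤ c - f c) (hgc : δ ≤ c - g c)
    (hnoise : ∀ n, (ω n).2 < δ) {n₀ : ℕ} (hn₀ : pertOrbit b f g y₀ n₀ ω ≤ c) :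
    ∀ n, n₀ < n → pertOrbit b f g y₀ n ω < c := by
  intro n hn
  induction n, hn using Nat.le_induction with
  | base => exact pertOrbit_succ_lt hf hg hy₀ hc hfc hgc hn₀ (hnoise n₀)
  | succ n _ ih => exact pertOrbit_succ_lt hf hg hy₀ hc hfc hgc ih.le (hnoise n)

lemma pertOrbit_add_le_iterate (hf : MonotoneOn f (Icc 0 b)) (hg : MonotoneOn g (Icc 0 b))
    (hfb : MapsTo f (Icc 0 b) (Icc 0 b)) (hgb : MapsTo g (Icc 0 b) (Icc 0 b))
    (hy₀ : y₀ ∈ Icc 0 b) {c : ℝ} (hc : c ∈ Icc 0 b) {m : ℕ}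
    (hm : pertOrbit b f g y₀ m ω ≤ c) :
    ∀ k, (∀ j < k, (ω (m + j)).2 ≤ 0) →
      pertOrbit b f g y₀ (m + k) ω ≤ (fun x => max (f x) (g x))^[k] c
  | 0, _ => hm
  | k + 1, hneg => by
    have hmaps : MapsTo (fun x => max (f x) (g x)) (Icc 0 b) (Icc 0 b) := fun x hx =>
      ⟨le_max_of_le_left (hfb hx).1, max_le (hfb hx).2 (hgb hx).2⟩
    have ha := hmaps.iterate k hc
    have ih := pertOrbit_add_le_iterate hf hg hfb hgb hy₀ hc hm k fun j hj => hneg j (by omega)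
    have hY := pertOrbit_mem_Icc (f := f) (g := g) (ω := ω) hy₀ (m + k)
    rw [Function.iterate_succ_apply', ← add_assoc]
    simp only [pertOrbit]
    split_ifs
    · exact chi_add_le_of_le hf hY ha ih (hneg k k.lt_succ_self) (le_max_left _ _) (hmaps ha)
    · exact chi_add_le_of_le hg hY ha ih (hneg k k.lt_succ_self) (le_max_right _ _) (hmaps ha)

end Orbit

lemma tendsto_iterate_nhds_zero {h : ℝ → ℝ} {c : ℝ} (hc : 0 ≤ c)
    (hcont : ContinuousOn h (Icc 0 c)) (h0 : h 0 = 0) (hlt : ∀ x ∈ Ioc 0 c, h x ∈ Ico 0 x) :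
    Tendsto (fun k => h^[k] c) atTop (𝓝 0) := by
  have hle : ∀ x ∈ Icc 0 c, h x ∈ Icc 0 x := fun x hx =>
    hx.1.eq_or_lt.elim (fun hx0 => by simp [← hx0, h0])
      fun hx0 => Ico_subset_Icc_self (hlt x ⟨hx0, hx.2⟩)
  have hmem : ∀ k, h^[k] c ∈ Icc 0 c := fun k => by
    induction k with
    | zero => exact ⟨hc, le_rfl⟩
    | succ k ih =>
      rw [Function.iterate_succ_apply']
      exact ⟨(hle _ ih).1, (hle _ ih).2.trans ih.2⟩
  have hanti : Antitone fun k => h^[k] c := antitone_nat_of_succ_le fun k => by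
    rw [Function.iterate_succ_apply']; exact (hle _ (hmem k)).2
  have hL := tendsto_atTop_ciInf hanti ⟨0, by rintro _ ⟨k, rfl⟩; exact (hmem k).1⟩
  set L := ⨅ k, h^[k] c
  have hLmem : L ∈ Icc 0 c := isClosed_Icc.mem_of_tendsto hL (Eventually.of_forall hmem)
  have hfix : h L = L := by
    refine tendsto_nhds_unique (f := fun k => h (h^[k] c)) (l := atTop)
      ((hcont L hLmem).tendsto.comp ?_) ?_
    · exact tendsto_nhdsWithin_iff.mpr ⟨hL, Eventually.of_forall hmem⟩
    · simpa only [Function.comp_def, ← Function.iterate_succ_apply' h] using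
        hL.comp (tendsto_add_atTop_nat 1)
  suffices L = 0 by rwa [this] at hL
  by_contra hL0
  exact (hlt L ⟨hLmem.1.lt_of_ne' hL0, hLmem.2⟩).2.ne hfix

namespace IsIncAlleeMap

variable {b A K : ℝ} {f : ℝ → ℝ}

lemma threshold_lt_bound (hf : IsIncAlleeMap b A K f) : A < b := hf.2.1.trans hf.2.2.1

lemma mapsTo (hf : IsIncAlleeMap b A K f) : MapsTo f (Icc 0 b) (Icc 0 b) := hf.2.2.2.1

lemma continuousOn (hf : IsIncAlleeMap b A K f) : ContinuousOn f (Icc 0 b) := hf.2.2.2.2.1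

lemma monotoneOn (hf : IsIncAlleeMap b A K f) : MonotoneOn f (Icc 0 b) :=
  hf.2.2.2.2.2.1.monotoneOn

lemma map_zero (hf : IsIncAlleeMap b A K f) : f 0 = 0 := hf.2.2.2.2.2.2.1

lemma map_mem_Ico_of_mem_Ioo (hf : IsIncAlleeMap b A K f) {x : ℝ} (hx : x ∈ Ioo 0 A) :
    f x ∈ Ico 0 x :=
  ⟨(hf.mapsTo ⟨hx.1.le, hx.2.le.trans hf.threshold_lt_bound.le⟩).1,
    hf.2.2.2.2.2.2.2.2.2.1 x (Or.inl hx)⟩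

lemma gap_of_mem_closure (hf : IsIncAlleeMap b A K f) {g : ℝ → ℝ}
    (hg : ContinuousOn g (Icc 0 b)) {δ : ℝ} (hδ : 0 < δ) {x : ℝ}
    (hx : x ∈ closure {x ∈ Ioo 0 A | δ ≤ min (x - f x) (x - g x)}) :
    x ∈ Ioo 0 A ∧ δ ≤ x - f x ∧ δ ≤ x - g x := by
  have hAb : Icc 0 A ⊆ Icc 0 b := Icc_subset_Icc_right hf.threshold_lt_bound.le
  have hclosed : IsClosed {x ∈ Icc 0 A | δ ≤ min (x - f x) (x - g x)} :=
    ((continuousOn_id.sub (hf.continuousOn.mono hAb)).inf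
      (continuousOn_id.sub (hg.mono hAb))).preimage_isClosed_of_isClosed isClosed_Icc isClosed_Ici
  obtain ⟨hxA, hgap⟩ :=
    closure_minimal (by exact fun _ hy => ⟨Ioo_subset_Icc_self hy.1, hy.2⟩) hclosed hx
  obtain ⟨hfx, hgx⟩ := le_min_iff.mp hgap
  have hx0 : 0 < x := by linarith [(hf.mapsTo (hAb hxA)).1]
  have hxA' : x ≠ A := by rintro rfl; linarith [hf.2.2.2.2.2.2.2.1]
  exact ⟨⟨hx0, hxA.2.lt_of_ne hxA'⟩, hfx, hgx⟩

end IsIncAlleeMap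

lemma tendsto_iterate_max_nhds_zero {b Af Kf Ag Kg : ℝ} {f g : ℝ → ℝ}
    (hf : IsIncAlleeMap b Af Kf f) (hg : IsIncAlleeMap b Ag Kg g) (hA : Af ≤ Ag) {z : ℝ}
    (hz : z ∈ Ioo 0 Af) : Tendsto (fun k => (fun x => max (f x) (g x))^[k] z) atTop (𝓝 0) := by
  refine tendsto_iterate_nhds_zero hz.1.le ((hf.continuousOn.sup hg.continuousOn).mono
    (Icc_subset_Icc_right (hz.2.trans hf.threshold_lt_bound).le))
    (by simp [hf.map_zero, hg.map_zero]) fun x hx => ?_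
  have hfx := hf.map_mem_Ico_of_mem_Ioo ⟨hx.1, hx.2.trans_lt hz.2⟩
  have hgx := hg.map_mem_Ico_of_mem_Ioo ⟨hx.1, (hx.2.trans_lt hz.2).trans_le hA⟩
  exact ⟨le_max_of_le_left hfx.1, max_lt hfx.2 hgx.2⟩

section Blocks

variable {Ω β : Type*} [MeasurableSpace Ω] [MeasurableSpace β] {μ : Measure Ω}
  {X : ℕ → Ω → β} {s : Set β} {q : ℝ≥0∞}

lemma pow_le_measure_block (hindep : iIndepFun X μ) (hs : MeasurableSet s)
    (hq : ∀ n, q ≤ μ (X n ⁻¹' s)) (m N : ℕ) :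
    q ^ N ≤ μ (⋂ j ∈ Finset.range N, X (m + j) ⁻¹' s) := by
  rw [← Finset.set_biInter_finset_image (f := (m + ·)) (g := fun i => X i ⁻¹' s),
    hindep.meas_biInter fun i _ => ⟨s, hs, rfl⟩,
    Finset.prod_image fun _ _ _ _ h => Nat.add_left_cancel h]
  simpa using Finset.pow_card_le_prod (Finset.range N) _ _ fun j _ => hq (m + j)

theorem ae_exists_block_mem [IsProbabilityMeasure μ] (hX : ∀ n, Measurable (X n))
    (hindep : iIndepFun X μ) (hs : MeasurableSet s) (hq₀ : q ≠ 0)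
    (hq : ∀ n, q ≤ μ (X n ⁻¹' s)) (N : ℕ) :
    ∀ᵐ ω ∂μ, ∃ m, ∀ j < N, X (m + j) ω ∈ s := by
  set D : ℕ → Set Ω := fun m => ⋂ j ∈ Finset.range N, X (m + j) ⁻¹' s
  set T : ℕ → Set Ω := fun n => ⋃ m ≥ n, D m
  have hD : ∀ m, MeasurableSet (D m) := fun m =>
    .biInter (Finset.range N).countable_toSet fun j _ => hX _ hs
  have hT : Antitone T := fun n n' h => biUnion_mono (fun m hm => h.trans hm) fun _ _ => le_rfl
  have htail : MeasurableSet[limsup (fun n => (inferInstance : MeasurableSpace β).comap (X n))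
      atTop] (⋂ n, T n) := by
    rw [limsup_eq_iInf_iSup_of_nat]
    refine MeasurableSpace.measurableSet_iInf.mpr fun n₀ => ?_
    have hshift : ⋂ n, T n = ⋂ n, T (n + n₀) :=
      Subset.antisymm (subset_iInter fun n => iInter_subset _ _)
        (subset_iInter fun n => (iInter_subset _ n).trans (hT (Nat.le_add_right n n₀)))
    rw [hshift]
    refine .iInter fun n => .biUnion (to_countable _) fun m hm => ?_
    refine .biInter (Finset.range N).countable_toSet fun j _ => ?_
    exact le_iSup₂ (f := fun i (_ : i ≥ n₀) => MeasurableSpace.comap (X i) inferInstance)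
      (m + j) (by have : n + n₀ ≤ m := hm; omega) _ ⟨s, hs, rfl⟩
  have hpos : q ^ N ≤ μ (⋂ n, T n) := by
    rw [hT.measure_iInter (fun n => (MeasurableSet.biUnion (to_countable _) fun m _ =>
      hD m).nullMeasurableSet) ⟨0, measure_ne_top μ _⟩]
    exact le_iInf fun n => (pow_le_measure_block hindep hs hq n N).trans
      (measure_mono (subset_biUnion_of_mem (u := D) (le_refl n)))
  have hone : μ (⋂ n, T n) = 1 :=
    (measure_zero_or_one_of_measurableSet_limsup_atTop (fun n => (hX n).comap_le)
      hindep.iIndep htail).resolve_left fun h0 => pow_ne_zero N hq₀ (le_zero_iff.mp (h0 ▸ hpos))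
  filter_upwards [(mem_ae_iff_prob_eq_one (.iInter fun n =>
    .biUnion (to_countable _) fun m _ => hD m)).mpr hone] with ω hω
  obtain ⟨m, -, hm⟩ := mem_iUnion₂.mp (mem_iInter.mp hω 0)
  exact ⟨m, fun j hj => mem_iInter₂.mp hm j (Finset.mem_range.mpr hj)⟩

end Blocks

section Noise

variable {Ω α γ : Type*} [MeasurableSpace Ω] [MeasurableSpace α] [MeasurableSpace γ]
  {μ : Measure Ω}

lemma map_snd_comp_eq_of_map_eq_prod {Y : Ω → α × γ} (hY : Measurable Y) {P : Measure α}
    [IsProbabilityMeasure P] {ν : Measure γ} [SFinite ν] (h : μ.map Y = P.prod ν) :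
    μ.map (Prod.snd ∘ Y) = ν := by
  rw [← Measure.map_map measurable_snd hY, h, Measure.map_snd_prod, measure_univ, one_smul]

lemma ae_forall_mem_of_map_eq {X : ℕ → Ω → γ} (hX : ∀ n, Measurable (X n)) {ν : Measure γ}
    [IsProbabilityMeasure ν] (hlaw : ∀ n, μ.map (X n) = ν) {s : Set γ} (hs : MeasurableSet s)
    (hνs : ν s = 1) : ∀ᵐ ω ∂μ, ∀ n, X n ω ∈ s :=
  ae_all_iff.mpr fun n => ae_of_ae_map (hX n).aemeasurable <| by
    rw [hlaw n]; exact (mem_ae_iff_prob_eq_one hs).mpr hνs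

end Noise

lemma eventually_pertOrbit_mem_Ico {b : ℝ} {f g : ℝ → ℝ}
    (hf : MonotoneOn f (Icc 0 b)) (hg : MonotoneOn g (Icc 0 b))
    (hfb : MapsTo f (Icc 0 b) (Icc 0 b)) (hgb : MapsTo g (Icc 0 b) (Icc 0 b)) {δ z w y₀ : ℝ}
    (hz : z ∈ Ioc 0 b) (hfz : δ ≤ z - f z) (hgz : δ ≤ z - g z)
    (hw : w ∈ Ioc 0 b) (hfw : δ ≤ w - f w) (hgw : δ ≤ w - g w) (hy₀ : y₀ ∈ Icc 0 z)
    {N : ℕ} (hN : (fun x => max (f x) (g x))^[N] z < w) {ω : ℕ → Bool × ℝ}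
    (hnoise : ∀ n, (ω n).2 < δ) {m : ℕ} (hblock : ∀ j < N, (ω (m + j)).2 ≤ 0) :
    ∃ n₀, ∀ n ≥ n₀, pertOrbit b f g y₀ n ω ∈ Ico 0 w := by
  have hy₀b : y₀ ∈ Icc 0 b := ⟨hy₀.1, hy₀.2.trans hz.2⟩
  have hbelow : pertOrbit b f g y₀ m ω ≤ z := m.eq_zero_or_pos.elim (fun h => h ▸ hy₀.2)
    fun h => (pertOrbit_lt_of_le hf hg hy₀b hz hfz hgz hnoise (n₀ := 0) hy₀.2 m h).le
  have hmN : pertOrbit b f g y₀ (m + N) ω < w :=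
    (pertOrbit_add_le_iterate hf hg hfb hgb hy₀b (Ioc_subset_Icc_self hz) hbelow N
      hblock).trans_lt hN
  refine ⟨m + N, fun n hn => ⟨(pertOrbit_mem_Icc hy₀b n).1, ?_⟩⟩
  rcases hn.eq_or_lt with rfl | hlt
  · exact hmN
  · exact pertOrbit_lt_of_le hf hg hy₀b hw hfw hgw hnoise hmN.le n hlt

theorem stmt5_general
    (b Af Kf Ag Kg : ℝ)
    (f g : ℝ → ℝ)
    (hf : IsIncAlleeMap b Af Kf f) (hg : IsIncAlleeMap b Ag Kg g)
    (horder : Af < Ag ∧ Ag < Kf ∧ Kf < Kg)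
    (p δ : ℝ) (hp : p ∈ Ioo (0 : ℝ) 1) (hδ : 0 < δ)
    -- the noise law
    (ν : Measure ℝ) [IsProbabilityMeasure ν]
    (hν₁ : ν (Ioo (-δ) δ) = 1)
    (hν₂ : ∀ a c : ℝ, -δ ≤ a → a < c → c ≤ δ → 0 < ν (Ioo a c))
    -- the i.i.d. driving sequence: independent coordinates, each with law Bernoulli(p) ⊗ ν
    (μ : Measure (ℕ → Bool × ℝ)) [IsProbabilityMeasure μ]
    (hindep : iIndepFun (fun n ω => ω n) μ)
    (hlaw : ∀ n, μ.map (fun ω => ω n) =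
      ((PMF.bernoulli (Real.toNNReal p) (Real.toNNReal_le_one.mpr hp.2.le)).toMeasure).prod ν)
    -- the sets U₁, U₂, U₃
    (U₁ : Set ℝ)
    (hU₁ : U₁ = {x ∈ Ioo 0 Af | δ ≤ min (x - f x) (x - g x)})
    (hU₁ne : U₁.Nonempty)
    (y₀ : ℝ) (hy₀ : y₀ ∈ Icc 0 (sSup U₁)) :
    μ {ω | ∃ n₀ : ℕ, ∀ n ≥ n₀, pertOrbit b f g y₀ n ω ∈ Ico 0 (sInf U₁)} = 1 := by
  have hU₁sub : U₁ ⊆ Ioo 0 Af := hU₁ ▸ fun _ hx => hx.1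
  obtain ⟨hzA, hfz, hgz⟩ := hf.gap_of_mem_closure (x := sSup U₁) hg.continuousOn hδ
    (by rw [← hU₁]; exact csSup_mem_closure hU₁ne (bddAbove_Ioo.mono hU₁sub))
  obtain ⟨hwA, hfw, hgw⟩ := hf.gap_of_mem_closure (x := sInf U₁) hg.continuousOn hδ
    (by rw [← hU₁]; exact csInf_mem_closure hU₁ne (bddBelow_Ioo.mono hU₁sub))
  have hAb : Ioo 0 Af ⊆ Ioc 0 b := fun x hx => ⟨hx.1, hx.2.le.trans hf.threshold_lt_bound.le⟩
  obtain ⟨N, hN⟩ :=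
    ((tendsto_iterate_max_nhds_zero hf hg horder.1.le hzA).eventually_lt_const hwA.1).exists
  have hX : ∀ n, Measurable fun ω : ℕ → Bool × ℝ => (ω n).2 :=
    fun n => measurable_snd.comp (measurable_pi_apply n)
  have hnoise : ∀ n, μ.map (fun ω => (ω n).2) = ν :=
    fun n => map_snd_comp_eq_of_map_eq_prod (measurable_pi_apply n) (hlaw n)
  have hsmall := ae_forall_mem_of_map_eq hX hnoise measurableSet_Ioo hν₁
  have hblock := ae_exists_block_mem hX (hindep.comp (fun _ => Prod.snd) fun _ => measurable_snd)
    measurableSet_Iio (hν₂ (-δ) 0 le_rfl (neg_lt_zero.mpr hδ) hδ.le).ne' (fun n => by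
      rw [← Measure.map_apply (hX n) measurableSet_Iio, hnoise n]
      exact measure_mono Ioo_subset_Iio_self) N
  have hae : ∀ᵐ ω ∂μ, ∃ n₀ : ℕ, ∀ n ≥ n₀, pertOrbit b f g y₀ n ω ∈ Ico 0 (sInf U₁) := by
    filter_upwards [hsmall, hblock] with ω hω ⟨m, hm⟩
    exact eventually_pertOrbit_mem_Ico hf.monotoneOn hg.monotoneOn hf.mapsTo hg.mapsTo
      (hAb hzA) hfz hgz (hAb hwA) hfw hgw hy₀ hN (fun n => (hω n).2) fun j hj => (hm j hj).le
  rw [measure_congr (ae_eq_univ.mpr (mem_ae_iff.mp hae)), measure_univ]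

theorem stmt5
    (b Af Kf Ag Kg : ℝ) (hb : 0 < b)
    (f g : ℝ → ℝ)
    (hf : IsIncAlleeMap b Af Kf f) (hg : IsIncAlleeMap b Ag Kg g)
    (horder : Af < Ag ∧ Ag < Kf ∧ Kf < Kg)
    (p δ : ℝ) (hp : p ∈ Ioo (0 : ℝ) 1) (hδ : 0 < δ)
    -- the noise law
    (ν : Measure ℝ) [IsProbabilityMeasure ν]
    (hν₁ : ν (Ioo (-δ) δ) = 1)
    (hν₂ : ∀ a c : ℝ, -δ ≤ a → a < c → c ≤ δ → 0 < ν (Ioo a c))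
    -- the i.i.d. driving sequence: independent coordinates, each with law Bernoulli(p) ⊗ ν
    (μ : Measure (ℕ → Bool × ℝ)) [IsProbabilityMeasure μ]
    (hindep : iIndepFun (fun n ω => ω n) μ)
    (hlaw : ∀ n, μ.map (fun ω => ω n) =
      ((PMF.bernoulli (Real.toNNReal p) (Real.toNNReal_le_one.mpr hp.2.le)).toMeasure).prod ν)
    -- the sets U₁, U₂, U₃
    (U₁ U₂ U₃ : Set ℝ)
    (hU₁ : U₁ = {x ∈ Ioo 0 Af | δ ≤ min (x - f x) (x - g x)})
    (hU₂ : U₂ = {x ∈ Ioo Ag Kf | δ ≤ min (f x - x) (g x - x)})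
    (hU₃ : U₃ = {x ∈ Ioo Kg b | δ ≤ min (x - f x) (x - g x)})
    (hU₁ne : U₁.Nonempty) (hU₂ne : U₂.Nonempty) (hU₃ne : U₃.Nonempty)
    (hstar : ∀ x ∈ Icc (0 : ℝ) b, ∃ y ∈ Icc x b, δ ≤ min (y - f y) (y - g y))
    (y₀ : ℝ) (hy₀ : y₀ ∈ Icc 0 (sSup U₁)) :
    μ {ω | ∃ n₀ : ℕ, ∀ n ≥ n₀, pertOrbit b f g y₀ n ω ∈ Ico 0 (sInf U₁)} = 1 :=
  stmt5_general b Af Kf Ag Kg f g hf hg horder p δ hp hδ ν hν₁ hν₂ μ hindep hlaw U₁ hU₁ hU₁ne y₀ hy₀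
end
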